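/- If G is a finitely generated abelian group with no 2-torsion, then the automorphism group of the core quandle Core(G) is a residually finite group. -/

import Mathlib

open Quandles

def ResiduallyFiniteGroup (G : Type*) [Group G] : Prop :=
  ∀ g : G, g ≠ 1 →
    ∃ (F : Type) (_ : Group F) (_ : Fintype F) (φ : G →* F), φ g ≠ 1

/-- The core quandle of a group: the underlying set of `G` with the operation
`a * b = b a⁻¹ b` (here written with the acting element first). -/
def Core (G : Type*) [Group G] : Type _ := G

instance Core.instGroup (G : Type*) [Group G] : Group (Core G) := ‹Group G›

instance Core.instQuandle (G : Type*) [Group G] : Quandle (Core G) where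
  act x y := x * y⁻¹ * x
  self_distrib := by intro x y z; group
  invAct x y := x * y⁻¹ * x
  left_inv x y := by show x * (x * y⁻¹ * x)⁻¹ * x = y; group
  right_inv x y := by show x * (x * y⁻¹ * x)⁻¹ * x = y; group
  fix := by intro x; show x * x⁻¹ * x = x; group

/-- The group of automorphisms of a quandle, under composition. -/
def QuandleAut (Q : Type*) [Quandle Q] : Type _ :=
  {f : Q ≃ Q // ∀ x y : Q, f (x ◃ y) = f x ◃ f y}

instance QuandleAut.instGroup (Q : Type*) [Quandle Q] : Group (QuandleAut Q) where
  mul f g := ⟨g.1.trans f.1, by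
    intro x y
    simp only [Equiv.trans_apply, g.2, f.2]⟩
  one := ⟨Equiv.refl Q, by intro x y; rfl⟩
  inv f := ⟨f.1.symm, by
    intro x y
    apply f.1.injective
    rw [f.2]
    simp⟩
  mul_assoc f g h := Subtype.ext (Equiv.ext fun x => rfl)
  one_mul f := Subtype.ext (Equiv.ext fun x => rfl)
  mul_one f := Subtype.ext (Equiv.ext fun x => rfl)
  inv_mul_cancel f := Subtype.ext (Equiv.ext fun x => f.1.symm_apply_apply x)

/-!
Every automorphism `u` of `Core G` is affine, `u x = u 1 * ψ x` with `ψ` an endomorphism of `G`: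
the core identity makes `ψ (a * b)` and `ψ a * ψ b` have the same square, and `G` has no
2-torsion. Hence `u` permutes the cosets of every subgroup `Gⁿ` of `n`-th powers, and `G ⧸ Gⁿ`
is finite because `G` is finitely generated. As a finitely generated abelian group is residually
finite, the cosets of the `Gⁿ` separate the points of `G`, so the actions of the automorphism
group on the finite sets `G ⧸ Gⁿ` separate its elements.
-/

theorem ZMod.intCast_ne_zero_of_natAbs_lt {k : ℤ} {m : ℕ} (hk : k ≠ 0) (hkm : k.natAbs < m) :
    (k : ZMod m) ≠ 0 := by
  rw [Ne, ZMod.intCast_zmod_eq_zero_iff_dvd]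
  exact fun hdvd => hk (Int.eq_zero_of_dvd_of_natAbs_lt_natAbs hdvd (by simpa using hkm))

theorem AddCommGroup.residuallyFinite_of_fg (A : Type*) [AddCommGroup A] [AddGroup.FG A] :
    AddGroup.ResiduallyFinite A := by
  obtain ⟨n, ι, _, p, hp, e, ⟨f⟩⟩ := AddCommGroup.equiv_free_prod_directSum_zmod A
  refine AddGroup.residuallyFinite_of_forall_exists_finite_addMonoidHom fun a ha => ?_
  have hfa : f a ≠ 0 := (map_ne_zero_iff f f.injective).mpr ha
  by_cases hfree : (f a).1 = 0
  · obtain ⟨i, hi⟩ := DFinsupp.ne_iff.1 fun htors => hfa (Prod.ext hfree htors)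
    have : NeZero (p i ^ e i) := ⟨pow_ne_zero _ (hp i).ne_zero⟩
    exact ⟨ZMod (p i ^ e i), _, inferInstance,
      (DFinsupp.evalAddMonoidHom i).comp ((AddMonoidHom.snd _ _).comp f.toAddMonoidHom), hi⟩
  · obtain ⟨i, hi⟩ := Finsupp.ne_iff.1 hfree
    exact ⟨ZMod ((f a).1 i).natAbs.succ, _, inferInstance,
      (Int.castAddHom _).comp ((Finsupp.applyAddHom i).comp
        ((AddMonoidHom.fst _ _).comp f.toAddMonoidHom)),
      ZMod.intCast_ne_zero_of_natAbs_lt hi (Nat.lt_succ_self _)⟩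

theorem CommGroup.residuallyFinite_of_fg (G : Type*) [CommGroup G] [Group.FG G] :
    Group.ResiduallyFinite G := by
  have := GroupFG.iff_add_fg.mp ‹_›
  have := AddCommGroup.residuallyFinite_of_fg (Additive G)
  rw [Group.residuallyFinite_iff_exists_finiteIndex]
  intro g hg
  obtain ⟨K, hK, hgK⟩ :=
    AddGroup.residuallyFinite_iff_exists_finiteIndex.mp this (Additive.ofMul g) hg
  refine ⟨Subgroup.toAddSubgroup.symm K, ?_, hgK⟩
  rw [← Subgroup.finiteIndex_toAddSubgroup_iff, OrderIso.apply_symm_apply]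
  exact hK

theorem CommGroup.exists_notMem_range_powMonoidHom {G : Type*} [CommGroup G]
    [Group.ResiduallyFinite G] {g : G} (hg : g ≠ 1) :
    ∃ n ≠ 0, g ∉ (powMonoidHom n : G →* G).range := by
  obtain ⟨H, hH, hgH⟩ := Group.residuallyFinite_iff_exists_finiteIndex.mp ‹_› g hg
  refine ⟨H.index, hH.index_ne_zero, fun ⟨x, hx⟩ => hgH ?_⟩
  rw [← hx]
  exact H.pow_index_mem x

theorem CommGroup.finite_quotient_range_powMonoidHom (G : Type*) [CommGroup G] [Group.FG G]
    {n : ℕ} (hn : n ≠ 0) : Finite (G ⧸ (powMonoidHom n : G →* G).range) := by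
  have : Group.FG (G ⧸ (powMonoidHom n : G →* G).range) :=
    Group.fg_of_surjective (QuotientGroup.mk'_surjective _)
  refine CommGroup.finite_of_fg_isMulTorsion _ fun q => ?_
  obtain ⟨x, rfl⟩ := QuotientGroup.mk'_surjective _ q
  refine isOfFinOrder_iff_pow_eq_one.2 ⟨n, Nat.pos_of_ne_zero hn, ?_⟩
  rw [← map_pow, QuotientGroup.mk'_apply, QuotientGroup.eq_one_iff]
  exact ⟨x, rfl⟩

theorem residuallyFiniteGroup_of_residuallyFinite (Γ : Type*) [Group Γ]
    [Group.ResiduallyFinite Γ] :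
    ResiduallyFiniteGroup Γ := by
  -- `Γ ⧸ H` need not live in `Type`; its Cayley image in `Perm (Fin m)` does.
  intro g hg
  obtain ⟨H, hgH⟩ := Group.exists_finiteIndexNormalSubgroup_notMem g hg
  let e := Finite.equivFin (Γ ⧸ H.toSubgroup)
  refine ⟨_, _, inferInstance, e.permCongrHom.toMonoidHom.comp (MulAction.toPermHom Γ _),
    fun hperm => hgH ?_⟩
  have hfix : (g : Γ ⧸ H.toSubgroup) = 1 := by
    simpa [← QuotientGroup.mk_one, MulAction.Quotient.smul_coe] using
      DFunLike.congr_fun hperm (e (1 : Γ))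
  rwa [QuotientGroup.eq_one_iff] at hfix

abbrev Setoid.quotientMulAction {Γ X : Type*} [Group Γ] [MulAction Γ X] (s : Setoid X)
    (hs : ∀ (g : Γ) (a b : X), s a b → s (g • a) (g • b)) : MulAction Γ (Quotient s) where
  smul g := Quotient.map (g • ·) (hs g)
  one_smul q := Quotient.inductionOn q fun a => congrArg _ (one_smul Γ a)
  mul_smul g h q := Quotient.inductionOn q fun a => congrArg _ (mul_smul g h a)

theorem Group.residuallyFinite_of_separating_invariant_setoids {Γ X : Type*} [Group Γ]
    [MulAction Γ X] [FaithfulSMul Γ X]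
    (h : ∀ x y : X, x ≠ y → ∃ s : Setoid X, Finite (Quotient s) ∧
      (∀ (g : Γ) (a b : X), s a b → s (g • a) (g • b)) ∧ ¬ s x y) :
    Group.ResiduallyFinite Γ := by
  refine Group.residuallyFinite_of_forall_exists_finite_monoidHom fun g hg => ?_
  obtain ⟨x, hx⟩ : ∃ x : X, g • x ≠ x := by
    by_contra! hfix
    exact hg (eq_of_smul_eq_smul fun x => (hfix x).trans (one_smul Γ x).symm)
  obtain ⟨s, hfin, hs, hsep⟩ := h _ _ hx
  let := s.quotientMulAction hs
  refine ⟨_, _, inferInstance, MulAction.toPermHom Γ (Quotient s), fun hperm => hsep ?_⟩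
  exact Quotient.exact (DFunLike.congr_fun hperm ⟦x⟧)

theorem map_mul_of_map_mul_inv_mul {G H : Type*} [CommGroup G] [CommGroup H]
    (hH : ∀ h : H, h * h = 1 → h = 1) {f : G → H} (hf1 : f 1 = 1)
    (hf : ∀ x y : G, f (x * y⁻¹ * x) = f x * (f y)⁻¹ * f x) (a b : G) :
    f (a * b) = f a * f b := by
  have map_inv (y : G) : f y⁻¹ = (f y)⁻¹ := by simpa [hf1] using hf 1 y
  have map_sq (x : G) : f (x * x) = f x * f x := by simpa [hf1] using hf x 1
  have map_sq_mul_sq : f (a * a * (b * b)) = f a * f a * (f b * f b) := by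
    have h := hf a (b * b)⁻¹
    rw [map_inv, map_sq, inv_inv, inv_inv] at h
    calc f (a * a * (b * b)) = f (a * (b * b) * a) := by congr 1; ac_rfl
      _ = f a * f a * (f b * f b) := by rw [h]; ac_rfl
  have hsq : (f (a * b) * (f a * f b)⁻¹) * (f (a * b) * (f a * f b)⁻¹) = 1 := by
    have h := map_sq (a * b)
    rw [show a * b * (a * b) = a * a * (b * b) by ac_rfl, map_sq_mul_sq] at h
    rw [mul_mul_mul_comm, ← h, ← mul_inv, mul_inv_eq_one]
    ac_rfl
  exact mul_inv_eq_one.mp (hH _ hsq)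

theorem exists_monoidHom_apply_eq_mul_of_map_mul_inv_mul {G H : Type*} [CommGroup G]
    [CommGroup H] (hH : ∀ h : H, h * h = 1 → h = 1) {f : G → H}
    (hf : ∀ x y : G, f (x * y⁻¹ * x) = f x * (f y)⁻¹ * f x) :
    ∃ ψ : G →* H, ∀ x : G, f x = f 1 * ψ x := by
  refine ⟨{ toFun := fun x => (f 1)⁻¹ * f x
            map_one' := inv_mul_cancel _
            map_mul' := map_mul_of_map_mul_inv_mul hH (f := fun x => (f 1)⁻¹ * f x)
              (inv_mul_cancel _) fun x y => ?_ }, ?_⟩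
  · simp only [hf]
    group
  · intro x
    simp

theorem inv_mul_mem_range_powMonoidHom_of_map_mul_inv_mul {G H : Type*} [CommGroup G]
    [CommGroup H] (hH : ∀ h : H, h * h = 1 → h = 1) {f : G → H}
    (hf : ∀ x y : G, f (x * y⁻¹ * x) = f x * (f y)⁻¹ * f x) (n : ℕ) {x y : G}
    (hxy : x⁻¹ * y ∈ (powMonoidHom n : G →* G).range) :
    (f x)⁻¹ * f y ∈ (powMonoidHom n : H →* H).range := by
  obtain ⟨ψ, hψ⟩ := exists_monoidHom_apply_eq_mul_of_map_mul_inv_mul hH hf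
  obtain ⟨z, hz⟩ := hxy
  refine ⟨ψ z, ?_⟩
  rw [hψ x, hψ y, powMonoidHom_apply, ← map_pow, ← powMonoidHom_apply, hz]
  simp only [map_mul, map_inv, mul_inv_rev]
  group

instance QuandleAut.instMulAction (Q : Type*) [Quandle Q] : MulAction (QuandleAut Q) Q where
  smul u x := u.1 x
  one_smul _ := rfl
  mul_smul _ _ _ := rfl

instance QuandleAut.instFaithfulSMul (Q : Type*) [Quandle Q] : FaithfulSMul (QuandleAut Q) Q :=
  ⟨fun h => Subtype.ext (Equiv.ext h)⟩

/-- If `G` is a finitely generated abelian group with no 2-torsion, then the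
automorphism group of the core quandle of `G` is residually finite. -/
theorem aut_core_residually_finite (G : Type*) [CommGroup G] (hfg : Group.FG G)
    (h2 : ∀ g : G, g * g = 1 → g = 1) :
    ResiduallyFiniteGroup (QuandleAut (Core G)) := by
  have := CommGroup.residuallyFinite_of_fg G
  suffices Group.ResiduallyFinite (QuandleAut (Core G)) from
    residuallyFiniteGroup_of_residuallyFinite _
  refine Group.residuallyFinite_of_separating_invariant_setoids (X := Core G)
    fun x y hxy => ?_
  obtain ⟨n, hn, hxyn⟩ := CommGroup.exists_notMem_range_powMonoidHom (G := G)
    (g := (x : G)⁻¹ * y) (inv_mul_eq_one.not.mpr hxy)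
  have invariant (u : QuandleAut (Core G)) {a b : G}
      (hab : a⁻¹ * b ∈ (powMonoidHom n : G →* G).range) :
      (u.1 a : G)⁻¹ * u.1 b ∈ (powMonoidHom n : G →* G).range :=
    inv_mul_mem_range_powMonoidHom_of_map_mul_inv_mul (G := G) (H := G) (f := u.1) h2 u.2 n hab
  exact ⟨QuotientGroup.leftRel (powMonoidHom n : G →* G).range,
    CommGroup.finite_quotient_range_powMonoidHom G hn,
    fun u _ _ hab =>
      QuotientGroup.leftRel_apply.mpr (invariant u (QuotientGroup.leftRel_apply.mp hab)),
    fun hrel => hxyn (QuotientGroup.leftRel_apply.mp hrel)⟩
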